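/- arXiv:1808.01781 — 2 statements merged into one kernel-verified Lean document; each statement's English description precedes it below -/
import Mathlib

section
/- Let a > 0, b > 0, p ≤ −1, let h : (0,∞) → ℝ be bounded and continuous, m_h = ∫₀^∞ h(t) g_{p,a,b}(t) dt, and let f_h(x) = (1/(x² g_{p,a,b}(x))) ∫₀ˣ g_{p,a,b}(t)(h(t) − m_h) dt. Then f_h is the unique bounded differentiable solution on (0,∞) of the GIG Stein equation x² f′(x) + (b/2 + (p+1)x − (a/2)x²) f(x) = h(x) − m_h, and sup_{x>0} |f_h(x)| ≤ M · sup_{x>0} |h(x) − m_h|, where α = (p + 1 + √((p+1)² + a b))/a and M = max( (1/(α² g_{p,a,b}(α))) ∫₀^α g_{p,a,b}(t) dt , (1/(α² g_{p,a,b}(α))) ∫_α^∞ g_{p,a,b}(t) dt ). -/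
open MeasureTheory Set Filter Real

/-- The generalized inverse Gaussian density with parameters `p ∈ ℝ`, `a > 0`, `b > 0`
(normalized by its total mass). -/
noncomputable def gigDensity (p a b : ℝ) (x : ℝ) : ℝ :=
  (∫ t in Set.Ioi (0 : ℝ), t ^ (p - 1) * Real.exp (-(a * t + b / t) / 2))⁻¹ *
    (x ^ (p - 1) * Real.exp (-(a * x + b / x) / 2))

open Topology

/-!
With `u(x) = x² g(x)` one has `u' = q g` for the drift `q(x) = b/2 + (p+1)x - (a/2)x²`, so the left
side of the Stein equation is `(u f)' / g`. Hence `f_h = u⁻¹ ∫₀ˣ g (h - m)` solves it, and another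
bounded solution differs from `f_h` by some `c / u`, which is unbounded near `0` unless `c = 0`
because `u → 0` there.

For `p ≤ -1` the drift is decreasing on `(0, ∞)`, so `q(x) ∫₀ˣ g ≤ ∫₀ˣ q g = u(x)` and
`-q(x) ∫ₓ^∞ g ≤ -∫ₓ^∞ q g = u(x)`. These make `u⁻¹ ∫₀ˣ g` increasing and `u⁻¹ ∫ₓ^∞ g` decreasing.
As `∫₀^∞ g (h - m) = 0`, also `f_h = -u⁻¹ ∫ₓ^∞ g (h - m)`; bounding `|f_h(x)|` through the first
form for `x ≤ α` and through the second for `x ≥ α` gives the constant `M`, for any `α > 0`.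
-/

noncomputable def gigKer (p a b x : ℝ) : ℝ := x ^ (p - 1) * exp (-(a * x + b / x) / 2)

lemma gigKer_pos (p a b : ℝ) {x : ℝ} (hx : 0 < x) : 0 < gigKer p a b x := by
  unfold gigKer; positivity

lemma gigKer_add_rpow (p s a b : ℝ) {x : ℝ} (hx : 0 < x) :
    gigKer (p + s) a b x = x ^ s * gigKer p a b x := by
  rw [gigKer, gigKer, add_sub_right_comm, rpow_add hx]; ring

lemma hasDerivAt_gigKer (p a b : ℝ) {x : ℝ} (hx : 0 < x) :
    HasDerivAt (gigKer p a b) (((p - 1) / x - (a - b / x ^ 2) / 2) * gigKer p a b x) x := by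
  have hpow : HasDerivAt (fun y => y ^ (p - 1)) ((p - 1) * x ^ (p - 1 - 1)) x :=
    hasDerivAt_rpow_const (Or.inl hx.ne')
  have hexp : HasDerivAt (fun y => -(a * y + b / y) / 2) (-(a - b / x ^ 2) / 2) x :=
    (((hasDerivAt_id' x).const_mul a).fun_add
      ((hasDerivAt_const x b).fun_div (hasDerivAt_id' x) hx.ne')).fun_neg.div_const 2
      |>.congr_deriv (by field_simp; ring)
  refine (hpow.mul hexp.exp).congr_deriv ?_
  rw [gigKer, rpow_sub_one hx.ne']
  field_simp
  ring

lemma continuousOn_gigKer (p a b : ℝ) : ContinuousOn (gigKer p a b) (Ioi 0) :=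
  fun _ hx => (hasDerivAt_gigKer p a b hx).continuousAt.continuousWithinAt

lemma exists_rpow_mul_exp_neg_mul_le (s : ℝ) {c : ℝ} (hc : 0 < c) :
    ∃ M, ∀ y, 1 ≤ y → y ^ s * exp (-(c * y)) ≤ M := by
  obtain ⟨n, hn⟩ := exists_nat_ge s
  refine ⟨n.factorial / c ^ n, fun y hy => ?_⟩
  have hcy : (c * y) ^ n / n.factorial ≤ exp (c * y) :=
    pow_div_factorial_le_exp _ (by positivity) n
  rw [div_le_iff₀ (by positivity), mul_pow] at hcy
  calc y ^ s * exp (-(c * y)) ≤ y ^ (n : ℝ) * exp (-(c * y)) := by gcongr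
    _ ≤ n.factorial / c ^ n := by
      rw [rpow_natCast, exp_neg, le_div_iff₀ (by positivity)]
      calc y ^ n * (exp (c * y))⁻¹ * c ^ n = c ^ n * y ^ n * (exp (c * y))⁻¹ := by ring
        _ ≤ exp (c * y) * n.factorial * (exp (c * y))⁻¹ := by gcongr
        _ = n.factorial := by field_simp

lemma integrableOn_gigKer_Ioi_one (p : ℝ) {a b : ℝ} (ha : 0 < a) (hb : 0 ≤ b) :
    IntegrableOn (gigKer p a b) (Ioi 1) := by
  obtain ⟨M, hM⟩ := exists_rpow_mul_exp_neg_mul_le (p - 1) (by positivity : 0 < a / 4)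
  refine ((exp_neg_integrableOn_Ioi 1 (by positivity : 0 < a / 4)).const_mul M).mono'
    (((continuousOn_gigKer p a b).mono (Ioi_subset_Ioi zero_le_one)).aestronglyMeasurable
      measurableSet_Ioi) ?_
  refine (ae_restrict_mem measurableSet_Ioi).mono fun x (hx : 1 < x) => ?_
  have hx0 : 0 < x := one_pos.trans hx
  rw [norm_of_nonneg (gigKer_pos p a b hx0).le]
  calc gigKer p a b x ≤ x ^ (p - 1) * exp (-(a / 4 * x)) * exp (-(a / 4) * x) := by
        rw [gigKer, mul_assoc, ← exp_add]
        gcongr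
        have : 0 ≤ b / x := by positivity
        linarith
    _ ≤ M * exp (-(a / 4) * x) := by gcongr; exact hM x hx.le

lemma integrableOn_gigKer_Ioc_zero_one (p : ℝ) {a b : ℝ} (ha : 0 ≤ a) (hb : 0 < b) :
    IntegrableOn (gigKer p a b) (Ioc 0 1) := by
  obtain ⟨M, hM⟩ := exists_rpow_mul_exp_neg_mul_le (1 - p) (by positivity : 0 < b / 2)
  refine Integrable.of_bound
    (((continuousOn_gigKer p a b).mono Ioc_subset_Ioi_self).aestronglyMeasurable
      measurableSet_Ioc) M ?_
  refine (ae_restrict_mem measurableSet_Ioc).mono fun x ⟨hx0, hx1⟩ => ?_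
  rw [norm_of_nonneg (gigKer_pos p a b hx0).le]
  calc gigKer p a b x ≤ x⁻¹ ^ (1 - p) * exp (-(b / 2 * x⁻¹)) := by
        rw [gigKer, inv_rpow hx0.le, ← rpow_neg hx0.le, neg_sub]
        gcongr
        have : 0 ≤ a * x := by positivity
        rw [← div_eq_mul_inv, div_right_comm]
        linarith
    _ ≤ M := hM _ ((one_le_inv₀ hx0).2 hx1)

lemma integrableOn_gigKer (p : ℝ) {a b : ℝ} (ha : 0 < a) (hb : 0 < b) :
    IntegrableOn (gigKer p a b) (Ioi 0) := by
  rw [← Ioc_union_Ioi_eq_Ioi zero_le_one]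
  exact (integrableOn_gigKer_Ioc_zero_one p ha.le hb).union
    (integrableOn_gigKer_Ioi_one p ha hb.le)

lemma gigKer_inv (p a b : ℝ) {x : ℝ} (hx : 0 < x) : gigKer p a b x⁻¹ = gigKer (2 - p) b a x := by
  rw [gigKer, gigKer, inv_rpow hx.le, ← rpow_neg hx.le, div_inv_eq_mul]
  ring_nf

lemma tendsto_gigKer_atTop (p : ℝ) {a b : ℝ} (ha : 0 < a) (hb : 0 ≤ b) :
    Tendsto (gigKer p a b) atTop (𝓝 0) := by
  refine tendsto_of_tendsto_of_tendsto_of_le_of_le' tendsto_const_nhds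
    (tendsto_rpow_mul_exp_neg_mul_atTop_nhds_zero (p - 1) (a / 2) (by positivity)) ?_ ?_
  · filter_upwards [eventually_gt_atTop 0] with x hx using (gigKer_pos p a b hx).le
  · filter_upwards [eventually_gt_atTop 0] with x hx
    rw [gigKer]
    gcongr
    have : 0 ≤ b / x := by positivity
    linarith

lemma integral_gigKer_pos (p : ℝ) {a b : ℝ} (ha : 0 < a) (hb : 0 < b) :
    0 < ∫ t in Ioi 0, gigKer p a b t := by
  rw [setIntegral_pos_iff_support_of_nonneg_ae
    ((ae_restrict_mem measurableSet_Ioi).mono fun x hx => (gigKer_pos p a b hx).le)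
    (integrableOn_gigKer p ha hb)]
  have : Ioi (0 : ℝ) ⊆ Function.support (gigKer p a b) ∩ Ioi 0 :=
    fun x hx => ⟨(gigKer_pos p a b hx).ne', hx⟩
  exact (by simp : 0 < volume (Ioi (0 : ℝ))).trans_le (measure_mono this)

lemma gigDensity_eq_inv_mul_gigKer (p a b : ℝ) :
    gigDensity p a b = fun x => (∫ t in Ioi 0, gigKer p a b t)⁻¹ * gigKer p a b x :=
  rfl

lemma gigDensity_pos (p : ℝ) {a b x : ℝ} (ha : 0 < a) (hb : 0 < b) (hx : 0 < x) :
    0 < gigDensity p a b x :=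
  mul_pos (inv_pos.2 (integral_gigKer_pos p ha hb)) (gigKer_pos p a b hx)

lemma continuousOn_gigDensity (p a b : ℝ) : ContinuousOn (gigDensity p a b) (Ioi 0) :=
  continuousOn_const.mul (continuousOn_gigKer p a b)

lemma integrableOn_gigDensity (p : ℝ) {a b : ℝ} (ha : 0 < a) (hb : 0 < b) :
    IntegrableOn (gigDensity p a b) (Ioi 0) :=
  (integrableOn_gigKer p ha hb).const_mul _

lemma integral_gigDensity (p : ℝ) {a b : ℝ} (ha : 0 < a) (hb : 0 < b) :
    ∫ t in Ioi 0, gigDensity p a b t = 1 := by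
  rw [gigDensity_eq_inv_mul_gigKer, integral_const_mul,
    inv_mul_cancel₀ (integral_gigKer_pos p ha hb).ne']

lemma integrableOn_gigDensity_mul (p : ℝ) {a b : ℝ} (ha : 0 < a) (hb : 0 < b) {w : ℝ → ℝ}
    (hw : AEStronglyMeasurable w (volume.restrict (Ioi 0))) {B : ℝ}
    (hB : ∀ x ∈ Ioi (0 : ℝ), |w x| ≤ B) :
    IntegrableOn (fun t => gigDensity p a b t * w t) (Ioi 0) := by
  refine ((integrableOn_gigDensity p ha hb).mul_const B).mono'
    (((continuousOn_gigDensity p a b).aestronglyMeasurable measurableSet_Ioi).mul hw) ?_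
  refine (ae_restrict_mem measurableSet_Ioi).mono fun t ht => ?_
  rw [norm_mul, norm_of_nonneg (gigDensity_pos p ha hb ht).le]
  exact mul_le_mul_of_nonneg_left (hB t ht) (gigDensity_pos p ha hb ht).le

lemma abs_setIntegral_gigDensity_mul_le (p : ℝ) {a b : ℝ} (ha : 0 < a) (hb : 0 < b)
    {w : ℝ → ℝ} {B : ℝ} (hB : ∀ x ∈ Ioi (0 : ℝ), |w x| ≤ B) {s : Set ℝ} (hs : MeasurableSet s)
    (hs0 : s ⊆ Ioi 0) :
    |∫ t in s, gigDensity p a b t * w t| ≤ B * ∫ t in s, gigDensity p a b t := by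
  rw [← integral_const_mul, ← Real.norm_eq_abs]
  refine norm_integral_le_of_norm_le
    (((integrableOn_gigDensity p ha hb).mono_set hs0).const_mul B)
    ((ae_restrict_mem hs).mono fun t ht => ?_)
  rw [norm_mul, norm_of_nonneg (gigDensity_pos p ha hb (hs0 ht)).le, mul_comm]
  exact mul_le_mul_of_nonneg_right (hB t (hs0 ht)) (gigDensity_pos p ha hb (hs0 ht)).le

lemma integral_gigDensity_mul_sub_mean (p : ℝ) {a b : ℝ} (ha : 0 < a) (hb : 0 < b) {h : ℝ → ℝ}
    (hh : IntegrableOn (fun t => gigDensity p a b t * h t) (Ioi 0)) :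
    ∫ t in Ioi 0, gigDensity p a b t * (h t - ∫ s in Ioi 0, h s * gigDensity p a b s) = 0 := by
  simp only [mul_sub]
  rw [integral_sub hh ((integrableOn_gigDensity p ha hb).mul_const _), integral_mul_const,
    integral_gigDensity p ha hb, one_mul]
  simp only [mul_comm, sub_self]

lemma intervalIntegrable_of_integrableOn_Ioi {w : ℝ → ℝ} (hw : IntegrableOn w (Ioi 0)) {x : ℝ}
    (hx : 0 ≤ x) : IntervalIntegrable w volume 0 x :=
  (intervalIntegrable_iff_integrableOn_Ioc_of_le hx).2 (hw.mono_set Ioc_subset_Ioi_self)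

noncomputable def gigDrift (p a b x : ℝ) : ℝ := b / 2 + (p + 1) * x - a / 2 * x ^ 2

noncomputable def gigWeight (p a b x : ℝ) : ℝ := x ^ 2 * gigDensity p a b x

lemma gigWeight_pos (p : ℝ) {a b x : ℝ} (ha : 0 < a) (hb : 0 < b) (hx : 0 < x) :
    0 < gigWeight p a b x :=
  mul_pos (pow_pos hx 2) (gigDensity_pos p ha hb hx)

lemma gigWeight_eq (p a b : ℝ) {x : ℝ} (hx : 0 < x) :
    gigWeight p a b x = (∫ t in Ioi 0, gigKer p a b t)⁻¹ * gigKer (p + 2) a b x := by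
  simp only [gigWeight, gigDensity_eq_inv_mul_gigKer, gigKer_add_rpow p 2 a b hx, Real.rpow_two]
  ring

lemma hasDerivAt_gigWeight (p a b : ℝ) {x : ℝ} (hx : 0 < x) :
    HasDerivAt (gigWeight p a b) (gigDrift p a b x * gigDensity p a b x) x := by
  have hK := ((hasDerivAt_gigKer (p + 2) a b hx).const_mul (∫ t in Ioi 0, gigKer p a b t)⁻¹)
  refine (hK.congr_of_eventuallyEq ?_).congr_deriv ?_
  · filter_upwards [Ioi_mem_nhds hx] with y hy using gigWeight_eq p a b hy
  · simp only [gigKer_add_rpow p 2 a b hx, Real.rpow_two, gigDrift, gigDensity_eq_inv_mul_gigKer]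
    field_simp
    ring

lemma tendsto_gigWeight_atTop (p : ℝ) {a b : ℝ} (ha : 0 < a) (hb : 0 < b) :
    Tendsto (gigWeight p a b) atTop (𝓝 0) := by
  have := (tendsto_gigKer_atTop (p + 2) ha hb.le).const_mul (∫ t in Ioi 0, gigKer p a b t)⁻¹
  rw [mul_zero] at this
  refine this.congr' ?_
  filter_upwards [eventually_gt_atTop 0] with x hx using (gigWeight_eq p a b hx).symm

-- `x ↦ x⁻¹` exchanges the two ends of `(0, ∞)` and `gigKer (p + 2) a b` with `gigKer (-p) b a`.
lemma tendsto_gigWeight_nhdsGT_zero (p : ℝ) {a b : ℝ} (ha : 0 < a) (hb : 0 < b) :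
    Tendsto (gigWeight p a b) (𝓝[>] 0) (𝓝 0) := by
  have := ((tendsto_gigKer_atTop (-p) hb ha.le).comp tendsto_inv_nhdsGT_zero).const_mul
    (∫ t in Ioi 0, gigKer p a b t)⁻¹
  rw [mul_zero] at this
  refine this.congr' ?_
  filter_upwards [self_mem_nhdsWithin] with x (hx : 0 < x)
  rw [gigWeight_eq p a b hx, Function.comp_apply, gigKer_inv _ _ _ hx, sub_neg_eq_add, add_comm]

lemma continuousWithinAt_gigWeight_zero (p : ℝ) {a b : ℝ} (ha : 0 < a) (hb : 0 < b) :
    ContinuousWithinAt (gigWeight p a b) (Ici 0) 0 := by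
  refine continuousWithinAt_Ioi_iff_Ici.mp ?_
  simpa [ContinuousWithinAt, gigWeight] using tendsto_gigWeight_nhdsGT_zero p ha hb

lemma integrableOn_gigDrift_mul_gigDensity (p : ℝ) {a b : ℝ} (ha : 0 < a) (hb : 0 < b) :
    IntegrableOn (fun t => gigDrift p a b t * gigDensity p a b t) (Ioi 0) := by
  have hK : IntegrableOn (fun x => (∫ t in Ioi 0, gigKer p a b t)⁻¹ * (b / 2 * gigKer p a b x
      + (p + 1) * gigKer (p + 1) a b x - a / 2 * gigKer (p + 2) a b x)) (Ioi 0) :=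
    ((((integrableOn_gigKer p ha hb).const_mul _).add
      ((integrableOn_gigKer (p + 1) ha hb).const_mul _)).sub
      ((integrableOn_gigKer (p + 2) ha hb).const_mul _)).const_mul _
  refine hK.congr_fun (fun x (hx : 0 < x) => ?_) measurableSet_Ioi
  simp only [gigDrift, gigDensity_eq_inv_mul_gigKer, gigKer_add_rpow p _ a b hx, rpow_one,
    Real.rpow_two]
  ring

lemma gigWeight_eq_integral (p : ℝ) {a b x : ℝ} (ha : 0 < a) (hb : 0 < b) (hx : 0 < x) :
    gigWeight p a b x = ∫ t in (0 : ℝ)..x, gigDrift p a b t * gigDensity p a b t := by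
  have hcont : ContinuousOn (gigWeight p a b) (Icc 0 x) := by
    intro t ⟨ht0, _⟩
    rcases ht0.eq_or_lt with rfl | ht
    · exact (continuousWithinAt_gigWeight_zero p ha hb).mono Icc_subset_Ici_self
    · exact (hasDerivAt_gigWeight p a b ht).continuousAt.continuousWithinAt
  rw [intervalIntegral.integral_eq_sub_of_hasDerivAt_of_le hx.le hcont
    (fun t ht => hasDerivAt_gigWeight p a b ht.1)
    (intervalIntegrable_of_integrableOn_Ioi (integrableOn_gigDrift_mul_gigDensity p ha hb) hx.le)]
  simp [gigWeight]

lemma gigWeight_eq_neg_integral_Ioi (p : ℝ) {a b x : ℝ} (ha : 0 < a) (hb : 0 < b) (hx : 0 < x) :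
    gigWeight p a b x = -∫ t in Ioi x, gigDrift p a b t * gigDensity p a b t := by
  rw [integral_Ioi_of_hasDerivAt_of_tendsto
    (hasDerivAt_gigWeight p a b hx).continuousAt.continuousWithinAt
    (fun t ht => hasDerivAt_gigWeight p a b (hx.trans ht))
    ((integrableOn_gigDrift_mul_gigDensity p ha hb).mono_set (Ioi_subset_Ioi hx.le))
    (tendsto_gigWeight_atTop p ha hb)]
  ring

lemma gigDrift_antitoneOn {p a : ℝ} (hp : p ≤ -1) (ha : 0 ≤ a) (b : ℝ) :
    AntitoneOn (gigDrift p a b) (Ici 0) := by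
  intro t (ht : 0 ≤ t) x _ htx
  have : (x - t) * ((p + 1) - a / 2 * (x + t)) ≤ 0 :=
    mul_nonpos_of_nonneg_of_nonpos (by linarith) (by nlinarith)
  simp only [gigDrift]
  nlinarith

lemma hasDerivAt_integral_of_continuousOn_Ioi {w : ℝ → ℝ} (hw_cont : ContinuousOn w (Ioi 0))
    (hw_int : IntegrableOn w (Ioi 0)) {x : ℝ} (hx : 0 < x) :
    HasDerivAt (fun y => ∫ t in (0 : ℝ)..y, w t) (w x) x :=
  intervalIntegral.integral_hasDerivAt_right
    (intervalIntegrable_of_integrableOn_Ioi hw_int hx.le)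
    (hw_cont.stronglyMeasurableAtFilter isOpen_Ioi x hx) (hw_cont.continuousAt (Ioi_mem_nhds hx))

lemma gigDrift_mul_integral_le_gigWeight {p a b x : ℝ} (hp : p ≤ -1) (ha : 0 < a) (hb : 0 < b)
    (hx : 0 < x) :
    gigDrift p a b x * ∫ t in (0 : ℝ)..x, gigDensity p a b t ≤ gigWeight p a b x := by
  rw [gigWeight_eq_integral p ha hb hx, ← intervalIntegral.integral_const_mul]
  refine intervalIntegral.integral_mono_on_of_le_Ioo hx.le
    (intervalIntegrable_of_integrableOn_Ioi ((integrableOn_gigDensity p ha hb).const_mul _) hx.le)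
    (intervalIntegrable_of_integrableOn_Ioi (integrableOn_gigDrift_mul_gigDensity p ha hb) hx.le)
    fun t ht => ?_
  exact mul_le_mul_of_nonneg_right (gigDrift_antitoneOn hp ha.le b (mem_Ici.2 ht.1.le)
    (mem_Ici.2 hx.le) ht.2.le) (gigDensity_pos p ha hb ht.1).le

lemma neg_gigDrift_mul_integral_Ioi_le_gigWeight {p a b x : ℝ} (hp : p ≤ -1) (ha : 0 < a)
    (hb : 0 < b) (hx : 0 < x) :
    -(gigDrift p a b x * ∫ t in Ioi x, gigDensity p a b t) ≤ gigWeight p a b x := by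
  rw [gigWeight_eq_neg_integral_Ioi p ha hb hx, neg_le_neg_iff, ← integral_const_mul]
  refine setIntegral_mono_on
    ((integrableOn_gigDrift_mul_gigDensity p ha hb).mono_set (Ioi_subset_Ioi hx.le))
    (((integrableOn_gigDensity p ha hb).mono_set (Ioi_subset_Ioi hx.le)).const_mul _)
    measurableSet_Ioi fun t (ht : x < t) => ?_
  exact mul_le_mul_of_nonneg_right (gigDrift_antitoneOn hp ha.le b (mem_Ici.2 hx.le)
    (mem_Ici.2 (hx.trans ht).le) ht.le) (gigDensity_pos p ha hb (hx.trans ht)).le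

lemma monotoneOn_inv_gigWeight_mul_integral {p a b : ℝ} (hp : p ≤ -1) (ha : 0 < a) (hb : 0 < b) :
    MonotoneOn (fun x => (gigWeight p a b x)⁻¹ * ∫ t in (0 : ℝ)..x, gigDensity p a b t)
      (Ioi 0) := by
  have hderiv : ∀ x ∈ Ioi (0 : ℝ), HasDerivAt
      (fun x => (gigWeight p a b x)⁻¹ * ∫ t in (0 : ℝ)..x, gigDensity p a b t)
      (gigDensity p a b x * (gigWeight p a b x - gigDrift p a b x *
        ∫ t in (0 : ℝ)..x, gigDensity p a b t) / gigWeight p a b x ^ 2) x := fun x hx =>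
    (((hasDerivAt_gigWeight p a b hx).inv (gigWeight_pos p ha hb hx).ne').mul
      (hasDerivAt_integral_of_continuousOn_Ioi (continuousOn_gigDensity p a b)
        (integrableOn_gigDensity p ha hb) hx)).congr_deriv (by
          simp only [Pi.inv_apply]
          field_simp [(gigWeight_pos p ha hb hx).ne']
          ring)
  refine monotoneOn_of_hasDerivWithinAt_nonneg (convex_Ioi 0)
    (fun x hx => (hderiv x hx).continuousAt.continuousWithinAt)
    (fun x hx => (hderiv x (interior_subset hx)).hasDerivWithinAt) fun x hx => ?_
  rw [interior_Ioi] at hx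
  exact div_nonneg (mul_nonneg (gigDensity_pos p ha hb hx).le
    (sub_nonneg.2 (gigDrift_mul_integral_le_gigWeight hp ha hb hx))) (sq_nonneg _)

lemma hasDerivAt_integral_Ioi_gigDensity (p : ℝ) {a b x : ℝ} (ha : 0 < a) (hb : 0 < b)
    (hx : 0 < x) :
    HasDerivAt (fun y => ∫ t in Ioi y, gigDensity p a b t) (-gigDensity p a b x) x := by
  refine ((hasDerivAt_integral_of_continuousOn_Ioi (continuousOn_gigDensity p a b)
    (integrableOn_gigDensity p ha hb) hx).const_sub 1).congr_of_eventuallyEq ?_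
  filter_upwards [Ioi_mem_nhds hx] with y (hy : 0 < y)
  rw [← integral_gigDensity p ha hb, ← intervalIntegral.integral_interval_add_Ioi
    (integrableOn_gigDensity p ha hb)
    ((integrableOn_gigDensity p ha hb).mono_set (Ioi_subset_Ioi hy.le)), add_sub_cancel_left]

lemma antitoneOn_inv_gigWeight_mul_integral_Ioi {p a b : ℝ} (hp : p ≤ -1) (ha : 0 < a)
    (hb : 0 < b) :
    AntitoneOn (fun x => (gigWeight p a b x)⁻¹ * ∫ t in Ioi x, gigDensity p a b t) (Ioi 0) := by
  have hderiv : ∀ x ∈ Ioi (0 : ℝ), HasDerivAt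
      (fun x => (gigWeight p a b x)⁻¹ * ∫ t in Ioi x, gigDensity p a b t)
      (-(gigDensity p a b x * (gigWeight p a b x + gigDrift p a b x *
        ∫ t in Ioi x, gigDensity p a b t)) / gigWeight p a b x ^ 2) x := fun x hx =>
    (((hasDerivAt_gigWeight p a b hx).inv (gigWeight_pos p ha hb hx).ne').mul
      (hasDerivAt_integral_Ioi_gigDensity p ha hb hx)).congr_deriv (by
          simp only [Pi.inv_apply]
          field_simp [(gigWeight_pos p ha hb hx).ne']
          ring)
  refine antitoneOn_of_hasDerivWithinAt_nonpos (convex_Ioi 0)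
    (fun x hx => (hderiv x hx).continuousAt.continuousWithinAt)
    (fun x hx => (hderiv x (interior_subset hx)).hasDerivWithinAt) fun x hx => ?_
  rw [interior_Ioi] at hx
  have hkey := neg_gigDrift_mul_integral_Ioi_le_gigWeight hp ha hb hx
  exact div_nonpos_of_nonpos_of_nonneg (neg_nonpos.2 (mul_nonneg (gigDensity_pos p ha hb hx).le
    (by linarith))) (sq_nonneg _)

noncomputable def gigSteinSolution (p a b : ℝ) (w : ℝ → ℝ) (x : ℝ) : ℝ :=
  (gigWeight p a b x)⁻¹ * ∫ t in (0 : ℝ)..x, gigDensity p a b t * w t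

lemma abs_gigSteinSolution_le {p a b : ℝ} (hp : p ≤ -1) (ha : 0 < a) (hb : 0 < b)
    {w : ℝ → ℝ} (hw : AEStronglyMeasurable w (volume.restrict (Ioi 0))) {B : ℝ}
    (hB : ∀ x ∈ Ioi (0 : ℝ), |w x| ≤ B)
    (hw_mean : ∫ t in Ioi 0, gigDensity p a b t * w t = 0) {α x : ℝ} (hα : 0 < α) (hx : 0 < x) :
    |gigSteinSolution p a b w x| ≤
      max ((gigWeight p a b α)⁻¹ * ∫ t in (0 : ℝ)..α, gigDensity p a b t)
        ((gigWeight p a b α)⁻¹ * ∫ t in Ioi α, gigDensity p a b t) * B := by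
  have hB0 : 0 ≤ B := (abs_nonneg _).trans (hB x hx)
  have hu : 0 ≤ (gigWeight p a b x)⁻¹ := (inv_pos.2 (gigWeight_pos p ha hb hx)).le
  rw [gigSteinSolution, abs_mul, abs_of_nonneg hu]
  rcases le_total x α with hxα | hαx
  · calc (gigWeight p a b x)⁻¹ * |∫ t in (0 : ℝ)..x, gigDensity p a b t * w t|
        ≤ (gigWeight p a b x)⁻¹ * (B * ∫ t in (0 : ℝ)..x, gigDensity p a b t) := by
          simp only [intervalIntegral.integral_of_le hx.le]
          exact mul_le_mul_of_nonneg_left (abs_setIntegral_gigDensity_mul_le p ha hb hB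
            measurableSet_Ioc Ioc_subset_Ioi_self) hu
      _ ≤ (gigWeight p a b α)⁻¹ * (∫ t in (0 : ℝ)..α, gigDensity p a b t) * B := by
          rw [mul_left_comm, mul_comm _ B]
          exact mul_le_mul_of_nonneg_left
            (monotoneOn_inv_gigWeight_mul_integral hp ha hb hx hα hxα) hB0
      _ ≤ _ := mul_le_mul_of_nonneg_right (le_max_left _ _) hB0
  · have htail : ∫ t in (0 : ℝ)..x, gigDensity p a b t * w t =
        -∫ t in Ioi x, gigDensity p a b t * w t := by
      have hint := integrableOn_gigDensity_mul p ha hb hw hB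
      rw [eq_neg_iff_add_eq_zero, intervalIntegral.integral_interval_add_Ioi hint
        (hint.mono_set (Ioi_subset_Ioi hx.le)), hw_mean]
    calc (gigWeight p a b x)⁻¹ * |∫ t in (0 : ℝ)..x, gigDensity p a b t * w t|
        ≤ (gigWeight p a b x)⁻¹ * (B * ∫ t in Ioi x, gigDensity p a b t) := by
          rw [htail, abs_neg]
          exact mul_le_mul_of_nonneg_left (abs_setIntegral_gigDensity_mul_le p ha hb hB
            measurableSet_Ioi (Ioi_subset_Ioi hx.le)) hu
      _ ≤ (gigWeight p a b α)⁻¹ * (∫ t in Ioi α, gigDensity p a b t) * B := by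
          rw [mul_left_comm, mul_comm _ B]
          exact mul_le_mul_of_nonneg_left
            (antitoneOn_inv_gigWeight_mul_integral_Ioi hp ha hb hα hx hαx) hB0
      _ ≤ _ := mul_le_mul_of_nonneg_right (le_max_right _ _) hB0

lemma hasDerivAt_gigSteinSolution (p : ℝ) {a b x : ℝ} (ha : 0 < a) (hb : 0 < b) {w : ℝ → ℝ}
    (hw_cont : ContinuousOn w (Ioi 0))
    (hw_int : IntegrableOn (fun t => gigDensity p a b t * w t) (Ioi 0)) (hx : 0 < x) :
    HasDerivAt (gigSteinSolution p a b w)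
      ((w x - gigDrift p a b x * gigSteinSolution p a b w x) / x ^ 2) x := by
  refine (((hasDerivAt_gigWeight p a b hx).inv (gigWeight_pos p ha hb hx).ne').mul
    (hasDerivAt_integral_of_continuousOn_Ioi ((continuousOn_gigDensity p a b).mul hw_cont)
      hw_int hx)).congr_deriv ?_
  have hg := (gigDensity_pos p ha hb hx).ne'
  simp only [Pi.inv_apply, Pi.mul_apply, gigSteinSolution, gigWeight]
  field_simp
  ring

lemma gigSteinSolution_stein_eq (p : ℝ) {a b x : ℝ} (ha : 0 < a) (hb : 0 < b) {w : ℝ → ℝ}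
    (hw_cont : ContinuousOn w (Ioi 0))
    (hw_int : IntegrableOn (fun t => gigDensity p a b t * w t) (Ioi 0)) (hx : 0 < x) :
    x ^ 2 * deriv (gigSteinSolution p a b w) x + gigDrift p a b x * gigSteinSolution p a b w x
      = w x := by
  rw [(hasDerivAt_gigSteinSolution p ha hb hw_cont hw_int hx).deriv]
  field_simp
  ring

lemma eq_of_stein_eq_of_bounded (p : ℝ) {a b : ℝ} (ha : 0 < a) (hb : 0 < b) {f₁ f₂ : ℝ → ℝ}
    (hf₁ : ∀ x ∈ Ioi (0 : ℝ), DifferentiableAt ℝ f₁ x)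
    (hf₂ : ∀ x ∈ Ioi (0 : ℝ), DifferentiableAt ℝ f₂ x)
    (hf₁_bdd : ∃ C, ∀ x ∈ Ioi (0 : ℝ), |f₁ x| ≤ C)
    (hf₂_bdd : ∃ C, ∀ x ∈ Ioi (0 : ℝ), |f₂ x| ≤ C)
    (heq : ∀ x ∈ Ioi (0 : ℝ), x ^ 2 * deriv f₁ x + gigDrift p a b x * f₁ x
      = x ^ 2 * deriv f₂ x + gigDrift p a b x * f₂ x) :
    ∀ x ∈ Ioi (0 : ℝ), f₁ x = f₂ x := by
  intro x hx
  set d := fun y => gigWeight p a b y * (f₁ y - f₂ y)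
  have hd : ∀ y ∈ Ioi (0 : ℝ), HasDerivAt d 0 y := fun y hy =>
    ((hasDerivAt_gigWeight p a b hy).mul ((hf₁ y hy).hasDerivAt.sub (hf₂ y hy).hasDerivAt))
      |>.congr_deriv (by
        simp only [gigWeight, Pi.sub_apply]
        linear_combination gigDensity p a b y * heq y hy)
  have hconst : ∀ y ∈ Ioi (0 : ℝ), d y = d x := fun y hy =>
    isOpen_Ioi.is_const_of_deriv_eq_zero isPreconnected_Ioi
      (fun z hz => (hd z hz).differentiableAt.differentiableWithinAt)
      (fun z hz => (hd z hz).deriv) hy hx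
  obtain ⟨C₁, hC₁⟩ := hf₁_bdd
  obtain ⟨C₂, hC₂⟩ := hf₂_bdd
  have hd_lim : Tendsto d (𝓝[>] 0) (𝓝 0) := by
    refine squeeze_zero_norm' ?_
      (by simpa using (tendsto_gigWeight_nhdsGT_zero p ha hb).const_mul (C₁ + C₂))
    filter_upwards [self_mem_nhdsWithin] with y (hy : 0 < y)
    rw [norm_mul, norm_of_nonneg (gigWeight_pos p ha hb hy).le, mul_comm]
    exact mul_le_mul_of_nonneg_right ((norm_sub_le _ _).trans (add_le_add (hC₁ y hy) (hC₂ y hy)))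
      (gigWeight_pos p ha hb hy).le
  have hdx : d x = 0 :=
    tendsto_nhds_unique (tendsto_const_nhds.congr' (eventually_nhdsWithin_of_forall
      fun y hy => (hconst y hy).symm)) hd_lim
  exact sub_eq_zero.1 ((mul_eq_zero.1 hdx).resolve_left (gigWeight_pos p ha hb hx).ne')

lemma add_sqrt_sq_add_pos (c : ℝ) {d : ℝ} (hd : 0 < d) : 0 < c + √(c ^ 2 + d) := by
  have : |c| < √(c ^ 2 + d) := by
    rw [← sqrt_sq_eq_abs]
    exact sqrt_lt_sqrt (sq_nonneg c) (by linarith)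
  linarith [neg_abs_le c]

/-- for `p ≤ −1`, the function `f_h` is the unique bounded differentiable
solution of the GIG Stein equation on `(0,∞)` and satisfies
`sup_{x>0} |f_h(x)| ≤ M · sup_{x>0} |h(x) − m_h|`, where
`α = (p + 1 + √((p+1)² + ab))/a` and
`M = max( (α² g(α))⁻¹ ∫₀^α g , (α² g(α))⁻¹ ∫_α^∞ g )`.
(The supremum bound is expressed via arbitrary upper bounds `B` of `|h − m_h|`.) -/
theorem gig_stein_solution_unique_bounded_and_bound (p a b : ℝ) (ha : 0 < a) (hb : 0 < b)
    (hp : p ≤ -1)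
    (h : ℝ → ℝ) (hh_cont : ContinuousOn h (Set.Ioi 0))
    (hh_bdd : ∃ C, ∀ x ∈ Set.Ioi (0 : ℝ), |h x| ≤ C) :
    let m := ∫ t in Set.Ioi (0 : ℝ), h t * gigDensity p a b t
    let fh : ℝ → ℝ := fun x =>
      (x ^ 2 * gigDensity p a b x)⁻¹ * ∫ t in (0 : ℝ)..x, gigDensity p a b t * (h t - m)
    let α := (p + 1 + Real.sqrt ((p + 1) ^ 2 + a * b)) / a
    let M := max ((α ^ 2 * gigDensity p a b α)⁻¹ * ∫ t in (0 : ℝ)..α, gigDensity p a b t)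
                 ((α ^ 2 * gigDensity p a b α)⁻¹ * ∫ t in Set.Ioi α, gigDensity p a b t)
    -- `f_h` is a bounded differentiable solution of the GIG Stein equation
    ((∀ x ∈ Set.Ioi (0 : ℝ), DifferentiableAt ℝ fh x ∧
        x ^ 2 * deriv fh x + (b / 2 + (p + 1) * x - a / 2 * x ^ 2) * fh x = h x - m) ∧
      (∃ C, ∀ x ∈ Set.Ioi (0 : ℝ), |fh x| ≤ C)) ∧
    -- uniqueness among bounded differentiable solutions
    (∀ f : ℝ → ℝ, (∀ x ∈ Set.Ioi (0 : ℝ), DifferentiableAt ℝ f x) →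
      (∃ C, ∀ x ∈ Set.Ioi (0 : ℝ), |f x| ≤ C) →
      (∀ x ∈ Set.Ioi (0 : ℝ),
        x ^ 2 * deriv f x + (b / 2 + (p + 1) * x - a / 2 * x ^ 2) * f x = h x - m) →
      ∀ x ∈ Set.Ioi (0 : ℝ), f x = fh x) ∧
    -- the uniform bound
    (∀ B : ℝ, (∀ x ∈ Set.Ioi (0 : ℝ), |h x - m| ≤ B) →
      ∀ x ∈ Set.Ioi (0 : ℝ), |fh x| ≤ M * B) := by
  intro m fh α M
  obtain ⟨C, hC⟩ := hh_bdd
  have hw_cont : ContinuousOn (fun t => h t - m) (Ioi 0) := hh_cont.sub continuousOn_const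
  have hw_meas := hw_cont.aestronglyMeasurable (μ := volume) measurableSet_Ioi
  have hw_bdd : ∀ x ∈ Ioi (0 : ℝ), |h x - m| ≤ C + |m| :=
    fun x hx => (abs_sub _ _).trans (add_le_add_left (hC x hx) _)
  have hw_int := integrableOn_gigDensity_mul p ha hb hw_meas hw_bdd
  have hw_mean := integral_gigDensity_mul_sub_mean p ha hb
    (integrableOn_gigDensity_mul p ha hb (hh_cont.aestronglyMeasurable measurableSet_Ioi) hC)
  have hbound : ∀ B : ℝ, (∀ x ∈ Ioi (0 : ℝ), |h x - m| ≤ B) →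
      ∀ x ∈ Ioi (0 : ℝ), |fh x| ≤ M * B :=
    fun B hB x hx => abs_gigSteinSolution_le hp ha hb hw_meas hB hw_mean
      (div_pos (add_sqrt_sq_add_pos _ (mul_pos ha hb)) ha) hx
  have hsol : ∀ x ∈ Ioi (0 : ℝ), DifferentiableAt ℝ fh x ∧
      x ^ 2 * deriv fh x + (b / 2 + (p + 1) * x - a / 2 * x ^ 2) * fh x = h x - m :=
    fun x hx => ⟨(hasDerivAt_gigSteinSolution p ha hb hw_cont hw_int hx).differentiableAt,
      gigSteinSolution_stein_eq p ha hb hw_cont hw_int hx⟩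
  refine ⟨⟨hsol, _, hbound _ hw_bdd⟩, fun f hf hf_bdd hf_eq => ?_, hbound⟩
  exact eq_of_stein_eq_of_bounded p ha hb hf (fun x hx => (hsol x hx).1) hf_bdd
    ⟨_, hbound _ hw_bdd⟩ fun x hx => (hf_eq x hx).trans (hsol x hx).2.symm
end

section
/- Let a > 0, b ∈ ℝ, c > 0. A Borel probability measure μ on (0,∞) has density k_{a,b,c} (with respect to Lebesgue measure) if and only if for every differentiable function f : (0,∞) → ℝ satisfying lim_{x→0⁺} x(1+x) k_{a,b,c}(x) f(x) = 0 and lim_{x→∞} x(1+x) k_{a,b,c}(x) f(x) = 0 and such that x ↦ x(1+x)f′(x) + ((1−b)x − c x(1+x) + a) f(x) is μ-integrable, one has ∫₀^∞ ( x(1+x) f′(x) + ((1−b)x − c x(1+x) + a) f(x) ) dμ(x) = 0. -/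
/-!
Density approach to Stein's method. With `s x = x (1 + x)` and
`τ x = (1 - b) x - c x (1 + x) + a` the Kummer density `k` satisfies `(s k)' = τ k` on
`(0, ∞)`, so `(s f' + τ f) k` is the derivative of `s k f`; if the boundary values of `s k f`
vanish, the Stein identity holds for `k`. Conversely, for a bounded continuous `h` the function
`f_h = (∫₀ˣ (h - ∫ h k) k) / (s k)` solves `s f' + τ f = h - ∫ h k` on `(0, ∞)`, and its boundary
term `∫₀ˣ (h - ∫ h k) k` tends to `0` at both ends because `k` is a probability density. The
Stein identity for `f_h` then gives `∫ h dμ = ∫ h k`, and bounded continuous functions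
determine a finite measure.
-/

open MeasureTheory Set Filter Real

/-- The Kummer density with parameters `a > 0`, `b ∈ ℝ`, `c > 0`
(normalized by its total mass). -/
noncomputable def kummerDensity (a b c : ℝ) (x : ℝ) : ℝ :=
  (∫ t in Set.Ioi (0 : ℝ), t ^ (a - 1) * (1 + t) ^ (-a - b) * Real.exp (-(c * t)))⁻¹ *
    (x ^ (a - 1) * (1 + x) ^ (-a - b) * Real.exp (-(c * x)))

open Topology BoundedContinuousFunction

section WithDensityOfReal

variable {α : Type*} [MeasurableSpace α] {μ : Measure α} {p : α → ℝ}

theorem integral_withDensity_ofReal (hp : AEMeasurable p μ) (hp_nonneg : 0 ≤ᵐ[μ] p)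
    (g : α → ℝ) :
    ∫ x, g x ∂μ.withDensity (fun x => ENNReal.ofReal (p x)) = ∫ x, g x * p x ∂μ := by
  rw [integral_withDensity_eq_integral_toReal_smul₀ hp.ennreal_ofReal
    (ae_of_all _ fun _ => ENNReal.ofReal_lt_top)]
  refine integral_congr_ae ?_
  filter_upwards [hp_nonneg] with x hx
  rw [ENNReal.toReal_ofReal hx, smul_eq_mul, mul_comm]

theorem integrable_withDensity_ofReal_iff (hp : AEMeasurable p μ) (hp_nonneg : 0 ≤ᵐ[μ] p)
    {g : α → ℝ} :
    Integrable g (μ.withDensity fun x => ENNReal.ofReal (p x)) ↔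
      Integrable (fun x => g x * p x) μ := by
  rw [integrable_withDensity_iff_integrable_smul₀' hp.ennreal_ofReal
    (ae_of_all _ fun _ => ENNReal.ofReal_lt_top)]
  refine integrable_congr ?_
  filter_upwards [hp_nonneg] with x hx
  rw [ENNReal.toReal_ofReal hx, smul_eq_mul, mul_comm]

theorem isProbabilityMeasure_withDensity_ofReal (hp : Integrable p μ) (hp_nonneg : 0 ≤ᵐ[μ] p)
    (hp_one : ∫ x, p x ∂μ = 1) :
    IsProbabilityMeasure (μ.withDensity fun x => ENNReal.ofReal (p x)) := by
  constructor
  rw [withDensity_apply _ MeasurableSet.univ, Measure.restrict_univ,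
    ← ofReal_integral_eq_lintegral_ofReal hp hp_nonneg, hp_one, ENNReal.ofReal_one]

end WithDensityOfReal

theorem tendsto_intervalIntegral_zero_nhdsGT_zero {q : ℝ → ℝ} (hq : IntegrableOn q (Ioc 0 1)) :
    Tendsto (fun x => ∫ t in 0..x, q t) (𝓝[>] 0) (𝓝 0) := by
  have hcont : ContinuousWithinAt (fun x => ∫ t in 0..x, q t) (Icc 0 1) 0 :=
    intervalIntegral.continuousWithinAt_primitive (by simp)
      ((intervalIntegrable_iff_integrableOn_Ioc_of_le (by simp)).mpr (by simpa using hq))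
  rw [← nhdsWithin_Ioo_eq_nhdsGT zero_lt_one]
  simpa using (hcont.mono Ioo_subset_Icc_self).tendsto

noncomputable def steinOperator (s τ f : ℝ → ℝ) (x : ℝ) : ℝ := s x * deriv f x + τ x * f x

section SteinIdentity

variable {p s τ : ℝ → ℝ}

theorem setIntegral_Ioi_steinOperator_mul_eq_zero
    (hsp : ∀ x ∈ Ioi (0 : ℝ), HasDerivAt (fun y => s y * p y) (τ x * p x) x)
    {f : ℝ → ℝ} (hf : ∀ x ∈ Ioi (0 : ℝ), DifferentiableAt ℝ f x)
    (hf_zero : Tendsto (fun x => s x * p x * f x) (𝓝[>] 0) (𝓝 0))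
    (hf_top : Tendsto (fun x => s x * p x * f x) atTop (𝓝 0))
    (hf_int : IntegrableOn (fun x => steinOperator s τ f x * p x) (Ioi 0)) :
    ∫ x in Ioi 0, steinOperator s τ f x * p x = 0 := by
  -- the boundary term need not vanish at `0` itself, only in the limit
  set F := Function.update (fun x => s x * p x * f x) 0 0 with hF
  have hF_deriv : ∀ x ∈ Ioi (0 : ℝ), HasDerivAt F (steinOperator s τ f x * p x) x := by
    intro x hx
    have hprod : HasDerivAt (fun y => s y * p y * f y) (steinOperator s τ f x * p x) x :=
      ((hsp x hx).mul (hf x hx).hasDerivAt).congr_deriv (by unfold steinOperator; ring)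
    refine hprod.congr_of_eventuallyEq ?_
    filter_upwards [Ioi_mem_nhds hx] with y hy using Function.update_of_ne hy.ne' _ _
  have hF_zero : ContinuousWithinAt F (Ici 0) 0 := by
    rwa [hF, continuousWithinAt_update_same, Ici_sdiff_left]
  have hF_top : Tendsto F atTop (𝓝 0) :=
    hf_top.congr' <| by
      filter_upwards [eventually_ne_atTop 0] with x hx using
        (Function.update_of_ne hx (0 : ℝ) (fun x => s x * p x * f x)).symm
  rw [integral_Ioi_of_hasDerivAt_of_tendsto hF_zero hF_deriv hf_int hF_top, hF,
    Function.update_self, sub_zero]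

end SteinIdentity

/-- Solution of the Stein equation `s f' + τ f = h - ∫ h p` on `(0, ∞)`. -/
noncomputable def steinSolution (p s h : ℝ → ℝ) (x : ℝ) : ℝ :=
  (∫ t in 0..x, (h t - ∫ u in Ioi 0, h u * p u) * p t) / (s x * p x)

section SteinSolution

variable {p s τ h : ℝ → ℝ}

theorem integrableOn_sub_const_mul (hp_int : IntegrableOn p (Ioi 0))
    (hhp : IntegrableOn (fun t => h t * p t) (Ioi 0)) (m : ℝ) :
    IntegrableOn (fun t => (h t - m) * p t) (Ioi 0) := by
  simp only [sub_mul]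
  exact hhp.sub (hp_int.const_mul m)

theorem hasDerivAt_steinSolution
    (hp_cont : ContinuousOn p (Ioi 0)) (hp_int : IntegrableOn p (Ioi 0))
    (hsp : ∀ x ∈ Ioi (0 : ℝ), HasDerivAt (fun y => s y * p y) (τ x * p x) x)
    (hh_cont : ContinuousOn h (Ioi 0)) (hhp : IntegrableOn (fun t => h t * p t) (Ioi 0))
    {x : ℝ} (hx : 0 < x) (hspx : s x * p x ≠ 0) :
    HasDerivAt (steinSolution p s h)
      (((h x - ∫ u in Ioi 0, h u * p u) * p x * (s x * p x) -
        (∫ t in 0..x, (h t - ∫ u in Ioi 0, h u * p u) * p t) * (τ x * p x)) /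
          (s x * p x) ^ 2) x := by
  set m := ∫ u in Ioi 0, h u * p u
  have hq := integrableOn_sub_const_mul hp_int hhp m
  have hq_cont : ContinuousOn (fun t => (h t - m) * p t) (Ioi 0) :=
    (hh_cont.sub continuousOn_const).mul hp_cont
  have hprim : HasDerivAt (fun x => ∫ t in 0..x, (h t - m) * p t) ((h x - m) * p x) x :=
    intervalIntegral.integral_hasDerivAt_right
      ((intervalIntegrable_iff_integrableOn_Ioc_of_le hx.le).mpr
        (hq.mono_set Ioc_subset_Ioi_self))
      (hq_cont.stronglyMeasurableAtFilter isOpen_Ioi x hx)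
      (hq_cont.continuousAt (Ioi_mem_nhds hx))
  exact hprim.div (hsp x hx) hspx

theorem steinOperator_steinSolution
    (hp_pos : ∀ x ∈ Ioi (0 : ℝ), 0 < p x) (hp_cont : ContinuousOn p (Ioi 0))
    (hp_int : IntegrableOn p (Ioi 0)) (hs_pos : ∀ x ∈ Ioi (0 : ℝ), 0 < s x)
    (hsp : ∀ x ∈ Ioi (0 : ℝ), HasDerivAt (fun y => s y * p y) (τ x * p x) x)
    (hh_cont : ContinuousOn h (Ioi 0)) (hhp : IntegrableOn (fun t => h t * p t) (Ioi 0))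
    {x : ℝ} (hx : 0 < x) :
    steinOperator s τ (steinSolution p s h) x = h x - ∫ u in Ioi 0, h u * p u := by
  have hpx := (hp_pos x hx).ne'
  have hsx := (hs_pos x hx).ne'
  rw [steinOperator,
    (hasDerivAt_steinSolution hp_cont hp_int hsp hh_cont hhp hx (mul_ne_zero hsx hpx)).deriv,
    steinSolution]
  field_simp
  ring

theorem mul_steinSolution {x : ℝ} (hspx : s x * p x ≠ 0) :
    s x * p x * steinSolution p s h x =
      ∫ t in 0..x, (h t - ∫ u in Ioi 0, h u * p u) * p t :=
  mul_div_cancel₀ _ hspx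

theorem tendsto_mul_steinSolution_nhdsGT_zero
    (hp_pos : ∀ x ∈ Ioi (0 : ℝ), 0 < p x) (hp_int : IntegrableOn p (Ioi 0))
    (hs_pos : ∀ x ∈ Ioi (0 : ℝ), 0 < s x) (hhp : IntegrableOn (fun t => h t * p t) (Ioi 0)) :
    Tendsto (fun x => s x * p x * steinSolution p s h x) (𝓝[>] 0) (𝓝 0) := by
  have hq := integrableOn_sub_const_mul hp_int hhp (∫ u in Ioi 0, h u * p u)
  refine (tendsto_intervalIntegral_zero_nhdsGT_zero (hq.mono_set Ioc_subset_Ioi_self)).congr' ?_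
  filter_upwards [self_mem_nhdsWithin] with x hx
  exact (mul_steinSolution (mul_pos (hs_pos x hx) (hp_pos x hx)).ne').symm

theorem tendsto_mul_steinSolution_atTop
    (hp_pos : ∀ x ∈ Ioi (0 : ℝ), 0 < p x) (hp_int : IntegrableOn p (Ioi 0))
    (hp_one : ∫ x in Ioi 0, p x = 1) (hs_pos : ∀ x ∈ Ioi (0 : ℝ), 0 < s x)
    (hhp : IntegrableOn (fun t => h t * p t) (Ioi 0)) :
    Tendsto (fun x => s x * p x * steinSolution p s h x) atTop (𝓝 0) := by
  set m := ∫ u in Ioi 0, h u * p u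
  have hq := integrableOn_sub_const_mul hp_int hhp m
  have hq_zero : ∫ t in Ioi 0, (h t - m) * p t = 0 := by
    simp only [sub_mul]
    rw [integral_sub hhp (hp_int.const_mul m), integral_const_mul, hp_one, mul_one, sub_self]
  have hlim := intervalIntegral_tendsto_integral_Ioi 0 hq tendsto_id
  rw [hq_zero] at hlim
  refine hlim.congr' ?_
  filter_upwards [eventually_gt_atTop 0] with x hx
  exact (mul_steinSolution (mul_pos (hs_pos x hx) (hp_pos x hx)).ne').symm

end SteinSolution

def SatisfiesSteinIdentity (p s τ : ℝ → ℝ) (μ : Measure ℝ) : Prop :=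
  ∀ f : ℝ → ℝ, (∀ x ∈ Ioi (0 : ℝ), DifferentiableAt ℝ f x) →
    Tendsto (fun x => s x * p x * f x) (𝓝[>] 0) (𝓝 0) →
    Tendsto (fun x => s x * p x * f x) atTop (𝓝 0) →
    Integrable (steinOperator s τ f) μ → ∫ x, steinOperator s τ f x ∂μ = 0

section Characterization

variable {p s τ : ℝ → ℝ}

theorem integral_eq_setIntegral_mul_of_satisfiesSteinIdentity
    (hp_pos : ∀ x ∈ Ioi (0 : ℝ), 0 < p x) (hp_cont : ContinuousOn p (Ioi 0))
    (hp_int : IntegrableOn p (Ioi 0)) (hp_one : ∫ x in Ioi 0, p x = 1)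
    (hs_pos : ∀ x ∈ Ioi (0 : ℝ), 0 < s x)
    (hsp : ∀ x ∈ Ioi (0 : ℝ), HasDerivAt (fun y => s y * p y) (τ x * p x) x)
    {μ : Measure ℝ} [IsProbabilityMeasure μ] (hμ : μ (Ioi 0)ᶜ = 0)
    (hμ_stein : SatisfiesSteinIdentity p s τ μ) (h : ℝ →ᵇ ℝ) :
    ∫ x, h x ∂μ = ∫ x in Ioi 0, h x * p x := by
  set m := ∫ x in Ioi 0, h x * p x
  have hhp : IntegrableOn (fun x => h x * p x) (Ioi 0) :=
    hp_int.bdd_mul h.continuous.aestronglyMeasurable (ae_of_all _ h.norm_coe_le_norm)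
  have hstein : ∀ᵐ x ∂μ, steinOperator s τ (steinSolution p s h) x = h x - m := by
    refine measure_mono_null (fun x hx => ?_) hμ
    exact fun hx' => hx (steinOperator_steinSolution hp_pos hp_cont hp_int hs_pos hsp
      h.continuous.continuousOn hhp hx')
  have hint : Integrable (fun x => h x - m) μ := (h.integrable μ).sub (integrable_const m)
  have hzero := hμ_stein (steinSolution p s h)
    (fun x hx => (hasDerivAt_steinSolution hp_cont hp_int hsp h.continuous.continuousOn hhp hx
      (mul_pos (hs_pos x hx) (hp_pos x hx)).ne').differentiableAt)
    (tendsto_mul_steinSolution_nhdsGT_zero hp_pos hp_int hs_pos hhp)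
    (tendsto_mul_steinSolution_atTop hp_pos hp_int hp_one hs_pos hhp)
    (hint.congr (hstein.mono fun _ hx => hx.symm))
  rwa [integral_congr_ae hstein, integral_sub (h.integrable μ) (integrable_const m),
    integral_const, probReal_univ, one_smul, sub_eq_zero] at hzero

theorem eq_withDensity_iff_satisfiesSteinIdentity
    (hp_pos : ∀ x ∈ Ioi (0 : ℝ), 0 < p x) (hp_cont : ContinuousOn p (Ioi 0))
    (hp_int : IntegrableOn p (Ioi 0)) (hp_one : ∫ x in Ioi 0, p x = 1)
    (hs_pos : ∀ x ∈ Ioi (0 : ℝ), 0 < s x)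
    (hsp : ∀ x ∈ Ioi (0 : ℝ), HasDerivAt (fun y => s y * p y) (τ x * p x) x)
    (μ : Measure ℝ) [IsProbabilityMeasure μ] (hμ : μ (Ioi 0)ᶜ = 0) :
    μ = (volume.restrict (Ioi 0)).withDensity (fun x => ENNReal.ofReal (p x)) ↔
      SatisfiesSteinIdentity p s τ μ := by
  have hp_meas : AEMeasurable p (volume.restrict (Ioi 0)) := hp_cont.aemeasurable measurableSet_Ioi
  have hp_nonneg : 0 ≤ᵐ[volume.restrict (Ioi 0)] p :=
    ae_restrict_of_forall_mem measurableSet_Ioi fun x hx => (hp_pos x hx).le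
  constructor
  · rintro rfl f hf hf_zero hf_top hf_int
    rw [integral_withDensity_ofReal hp_meas hp_nonneg]
    exact setIntegral_Ioi_steinOperator_mul_eq_zero hsp hf hf_zero hf_top
      ((integrable_withDensity_ofReal_iff hp_meas hp_nonneg).mp hf_int)
  · intro hμ_stein
    have := isProbabilityMeasure_withDensity_ofReal hp_int hp_nonneg hp_one
    refine ext_of_forall_integral_eq_of_IsFiniteMeasure fun h => ?_
    rw [integral_withDensity_ofReal hp_meas hp_nonneg,
      integral_eq_setIntegral_mul_of_satisfiesSteinIdentity hp_pos hp_cont hp_int hp_one hs_pos hsp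
        hμ hμ_stein h]

end Characterization

theorem one_add_rpow_le_two_rpow_abs_mul {x : ℝ} (hx : 0 ≤ x) (q : ℝ) :
    (1 + x) ^ q ≤ 2 ^ |q| * (1 + x ^ |q|) := by
  have hmax : max 1 x ^ |q| ≤ 1 + x ^ |q| := by
    rcases le_total x 1 with h | h
    · rw [max_eq_left h, one_rpow]
      linarith [rpow_nonneg hx |q|]
    · rw [max_eq_right h]
      linarith
  calc (1 + x) ^ q ≤ (1 + x) ^ |q| := rpow_le_rpow_of_exponent_le (by linarith) (le_abs_self q)
    _ ≤ (2 * max 1 x) ^ |q| :=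
        rpow_le_rpow (by linarith) (by linarith [le_max_left 1 x, le_max_right 1 x]) (abs_nonneg q)
    _ = 2 ^ |q| * max 1 x ^ |q| := mul_rpow zero_le_two (hx.trans (le_max_right 1 x))
    _ ≤ 2 ^ |q| * (1 + x ^ |q|) := by gcongr

theorem integrableOn_rpow_mul_exp_neg_mul {s b : ℝ} (hs : -1 < s) (hb : 0 < b) :
    IntegrableOn (fun x : ℝ => x ^ s * exp (-(b * x))) (Ioi 0) := by
  simpa using integrableOn_rpow_mul_exp_neg_mul_rpow hs one_pos hb

noncomputable def kummerKernel (a b c x : ℝ) : ℝ :=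
  x ^ (a - 1) * (1 + x) ^ (-a - b) * exp (-(c * x))

section Kummer

variable {a b c : ℝ}

theorem kummerDensity_eq_inv_mul (a b c x : ℝ) :
    kummerDensity a b c x = (∫ t in Ioi 0, kummerKernel a b c t)⁻¹ * kummerKernel a b c x :=
  rfl

theorem kummerKernel_pos {x : ℝ} (hx : 0 < x) : 0 < kummerKernel a b c x := by
  unfold kummerKernel
  have : 0 < 1 + x := by linarith
  positivity

theorem hasDerivAt_kummerKernel {x : ℝ} (hx : 0 < x) :
    HasDerivAt (kummerKernel a b c)
      (((a - 1) / x - (a + b) / (1 + x) - c) * kummerKernel a b c x) x := by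
  have hx1 : 1 + x ≠ 0 := by positivity
  have hpow : HasDerivAt (fun y => y ^ (a - 1)) ((a - 1) * x ^ (a - 1 - 1)) x :=
    hasDerivAt_rpow_const (Or.inl hx.ne')
  have hpow' :
      HasDerivAt (fun y => (1 + y) ^ (-a - b)) (1 * (-a - b) * (1 + x) ^ (-a - b - 1)) x :=
    ((hasDerivAt_id x).const_add 1).rpow_const (Or.inl hx1)
  have hexp : HasDerivAt (fun y => exp (-(c * y))) (exp (-(c * x)) * -(c * 1)) x :=
    ((hasDerivAt_id x).const_mul c).neg.exp
  refine ((hpow.fun_mul hpow').fun_mul hexp).congr_deriv ?_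
  rw [rpow_sub_one hx.ne', rpow_sub_one hx1, kummerKernel]
  field_simp
  ring

theorem continuousOn_kummerKernel : ContinuousOn (kummerKernel a b c) (Ioi 0) :=
  fun _ hx => (hasDerivAt_kummerKernel hx).continuousAt.continuousWithinAt

theorem kummerKernel_le {x : ℝ} (hx : 0 < x) :
    kummerKernel a b c x ≤
      2 ^ |-a - b| * (x ^ (a - 1) * exp (-(c * x)) + x ^ (a - 1 + |-a - b|) * exp (-(c * x))) := by
  rw [rpow_add hx, kummerKernel]
  have hbound := one_add_rpow_le_two_rpow_abs_mul hx.le (-a - b)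
  have hpow := rpow_pos_of_pos hx (a - 1)
  have hexp := exp_pos (-(c * x))
  calc x ^ (a - 1) * (1 + x) ^ (-a - b) * exp (-(c * x))
      ≤ x ^ (a - 1) * (2 ^ |-a - b| * (1 + x ^ |-a - b|)) * exp (-(c * x)) := by gcongr
    _ = _ := by ring

theorem integrableOn_kummerKernel (ha : 0 < a) (hc : 0 < c) :
    IntegrableOn (kummerKernel a b c) (Ioi 0) := by
  have hbound := ((integrableOn_rpow_mul_exp_neg_mul (s := a - 1) (by linarith) hc).add
    (integrableOn_rpow_mul_exp_neg_mul (s := a - 1 + |-a - b|) (by linarith [abs_nonneg (-a - b)])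
      hc)).const_mul (2 ^ |-a - b|)
  refine hbound.mono' (continuousOn_kummerKernel.aestronglyMeasurable measurableSet_Ioi) ?_
  refine ae_restrict_of_forall_mem measurableSet_Ioi fun x hx => ?_
  rw [norm_of_nonneg (kummerKernel_pos hx).le]
  exact kummerKernel_le hx

theorem integral_kummerKernel_pos (ha : 0 < a) (hc : 0 < c) :
    0 < ∫ t in Ioi 0, kummerKernel a b c t := by
  rw [setIntegral_pos_iff_support_of_nonneg_ae
      (ae_restrict_of_forall_mem measurableSet_Ioi fun x hx => (kummerKernel_pos hx).le)
      (integrableOn_kummerKernel ha hc)]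
  calc 0 < volume (Ioi (0 : ℝ)) := by simp
    _ ≤ volume (Function.support (kummerKernel a b c) ∩ Ioi 0) :=
        measure_mono fun x hx => ⟨(kummerKernel_pos hx).ne', hx⟩

theorem kummerDensity_pos (ha : 0 < a) (hc : 0 < c) {x : ℝ} (hx : 0 < x) :
    0 < kummerDensity a b c x :=
  mul_pos (inv_pos.mpr (integral_kummerKernel_pos ha hc)) (kummerKernel_pos hx)

theorem continuousOn_kummerDensity : ContinuousOn (kummerDensity a b c) (Ioi 0) :=
  continuousOn_const.mul continuousOn_kummerKernel

theorem integrableOn_kummerDensity (ha : 0 < a) (hc : 0 < c) :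
    IntegrableOn (kummerDensity a b c) (Ioi 0) :=
  (integrableOn_kummerKernel ha hc).const_mul _

theorem setIntegral_kummerDensity (ha : 0 < a) (hc : 0 < c) :
    ∫ x in Ioi 0, kummerDensity a b c x = 1 := by
  simp only [kummerDensity_eq_inv_mul]
  rw [integral_const_mul, inv_mul_cancel₀ (integral_kummerKernel_pos ha hc).ne']

theorem hasDerivAt_mul_kummerDensity {x : ℝ} (hx : 0 < x) :
    HasDerivAt (fun y => y * (1 + y) * kummerDensity a b c y)
      (((1 - b) * x - c * x * (1 + x) + a) * kummerDensity a b c x) x := by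
  set C := (∫ t in Ioi 0, kummerKernel a b c t)⁻¹
  refine (((hasDerivAt_id' x).fun_mul ((hasDerivAt_id' x).const_add 1)).fun_mul
    ((hasDerivAt_kummerKernel hx).const_mul C)).congr_deriv ?_
  rw [kummerDensity_eq_inv_mul]
  field_simp
  ring

end Kummer

/-- Stein characterization of the Kummer distribution: a Borel probability
measure `μ` on `(0,∞)` has density `k_{a,b,c}` iff
`∫ ( x(1+x)f'(x) + ((1−b)x − cx(1+x) + a) f(x) ) dμ = 0` for all admissible `f`. -/
theorem kummer_stein_characterization (a b c : ℝ) (ha : 0 < a) (hc : 0 < c)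
    (μ : Measure ℝ) [IsProbabilityMeasure μ] (hμ : μ (Set.Ioi 0)ᶜ = 0) :
    μ = (volume.restrict (Set.Ioi 0)).withDensity
          (fun x => ENNReal.ofReal (kummerDensity a b c x)) ↔
      ∀ f : ℝ → ℝ, (∀ x ∈ Set.Ioi (0 : ℝ), DifferentiableAt ℝ f x) →
        Tendsto (fun x => x * (1 + x) * kummerDensity a b c x * f x)
          (nhdsWithin 0 (Set.Ioi 0)) (nhds 0) →
        Tendsto (fun x => x * (1 + x) * kummerDensity a b c x * f x) atTop (nhds 0) →
        Integrable (fun x =>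
          x * (1 + x) * deriv f x + ((1 - b) * x - c * x * (1 + x) + a) * f x) μ →
        ∫ x, (x * (1 + x) * deriv f x
          + ((1 - b) * x - c * x * (1 + x) + a) * f x) ∂μ = 0 :=
  eq_withDensity_iff_satisfiesSteinIdentity (s := fun x => x * (1 + x))
    (τ := fun x => (1 - b) * x - c * x * (1 + x) + a)
    (fun _ hx => kummerDensity_pos ha hc hx) continuousOn_kummerDensity
    (integrableOn_kummerDensity ha hc) (setIntegral_kummerDensity ha hc)
    (fun _ hx => mul_pos hx (add_pos one_pos hx)) (fun _ hx => hasDerivAt_mul_kummerDensity hx)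
    μ hμ
end
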